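/- The semi-Thue system R over Σ = A ∪ Ā with rules a b̄ → b̄ a for a ≠ b, a b b̄ → a b̄ b, and a ā b̄ → ā a b̄ (for a, b ∈ A) is terminating. -/
import Mathlib


/-- A basic queue action: write a letter or read a letter. -/
inductive Act (A : Type) : Type
  | wr (a : A)
  | rd (a : A)
deriving DecidableEq

variable {A : Type} [DecidableEq A]

/-- The action of words over `Act A` on queue states `A* ∪ {⊥}` (⊥ = `none`). -/
def act : Option (List A) → List (Act A) → Option (List A)
  | q, [] => q
  | none, _ :: _ => none
  | some q, (Act.wr a) :: u => act (some (q ++ [a])) u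
  | some q, (Act.rd a) :: u =>
    match q with
    | [] => none
    | b :: q' => if b = a then act (some q') u else none

/-- Two words over `Act A` are equivalent if they act identically on all queues. -/
def qequiv (u v : List (Act A)) : Prop := ∀ q : List A, act (some q) u = act (some q) v

/-- Writing the word `w`. -/
def W (w : List A) : List (Act A) := w.map Act.wr

/-- Reading the word `w` (the barred copy of `w`). -/
def R (w : List A) : List (Act A) := w.map Act.rd

/-- `shuffle s` is the word `s₁ s̄₁ s₂ s̄₂ … sₖ s̄ₖ`. -/
def shuffle (s : List A) : List (Act A) := s.flatMap fun a => [Act.wr a, Act.rd a]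

/-- The projection to write letters. -/
def prW (w : List (Act A)) : List A :=
  w.filterMap fun x => match x with | Act.wr a => some a | Act.rd _ => none

/-- The projection to read letters (with the bars removed). -/
def prR (w : List (Act A)) : List A :=
  w.filterMap fun x => match x with | Act.wr _ => none | Act.rd a => some a

theorem act_append (u v : List (Act A)) : ∀ q, act q (u ++ v) = act (act q u) v := by
  induction u with
  | nil =>
      intro q
      cases q <;> rfl
  | cons x u ih =>
      intro q
      cases q with
      | none =>
          simp only [List.cons_append, act]
          cases v with
          | nil => rfl
          | cons _ _ => rfl
      | some q =>
          cases x with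
          | wr a => simpa [act] using ih _
          | rd a =>
              cases q with
              | nil =>
                  simp only [List.cons_append, act]
                  cases v with
                  | nil => rfl
                  | cons _ _ => rfl
              | cons b q' =>
                  by_cases h : b = a
                  · simp [List.cons_append, act, h, ih]
                  · simp only [List.cons_append, act, if_neg h]
                    cases v with
                    | nil => rfl
                    | cons _ _ => rfl

/-- The setoid of queue-action equivalence. -/
def qsetoid (A : Type) [DecidableEq A] : Setoid (List (Act A)) :=
  ⟨qequiv, ⟨fun _ _ => rfl, fun h q => (h q).symm, fun h1 h2 q => (h1 q).trans (h2 q)⟩⟩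

/-- The monoid of queue actions. -/
def QAct (A : Type) [DecidableEq A] : Type := Quotient (qsetoid A)

theorem act_none : ∀ v : List (Act A), act (none : Option (List A)) v = none
  | [] => rfl
  | _ :: _ => rfl

theorem qequiv_append {u u' v v' : List (Act A)} (hu : qequiv u u') (hv : qequiv v v') :
    qequiv (u ++ v) (u' ++ v') := by
  intro q
  rw [act_append, act_append, hu q]
  cases h : act (some q) u' with
  | none => rw [act_none, act_none]
  | some q' => exact hv q'

instance : Monoid (QAct A) where
  mul := Quotient.map₂ (· ++ ·) (fun _ _ hu _ _ hv => qequiv_append hu hv)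
  one := Quotient.mk (qsetoid A) []
  mul_assoc := by
    rintro ⟨u⟩ ⟨v⟩ ⟨w⟩
    exact congrArg (Quotient.mk (qsetoid A)) (List.append_assoc u v w)
  one_mul := by
    rintro ⟨u⟩
    rfl
  mul_one := by
    rintro ⟨u⟩
    exact congrArg (Quotient.mk (qsetoid A)) (List.append_nil u)

/-- The class of a word in the monoid of queue actions. -/
def cls (w : List (Act A)) : QAct A := Quotient.mk (qsetoid A) w

theorem cls_mul (u v : List (Act A)) : cls u * cls v = cls (u ++ v) := rfl

/-- The rules of the semi-Thue system `R`. -/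
inductive Rule : List (Act A) → List (Act A) → Prop
  | comm (a b : A) (h : a ≠ b) : Rule [Act.wr a, Act.rd b] [Act.rd b, Act.wr a]
  | wwr (a b : A) : Rule [Act.wr a, Act.wr b, Act.rd b] [Act.wr a, Act.rd b, Act.wr b]
  | wrr (a b : A) : Rule [Act.wr a, Act.rd a, Act.rd b] [Act.rd a, Act.wr a, Act.rd b]

/-- One rewriting step of the semi-Thue system `R`. -/
def Step (u v : List (Act A)) : Prop :=
  ∃ (l r x y : List (Act A)), Rule x y ∧ u = l ++ x ++ r ∧ v = l ++ y ++ r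

/-- The measure: number of pairs of a write letter occurring before a read letter. -/
def mu : List (Act A) → ℕ
  | [] => 0
  | Act.wr _ :: t => (prR t).length + mu t
  | Act.rd _ :: t => mu t

theorem prR_append (u v : List (Act A)) : prR (u ++ v) = prR u ++ prR v :=
  List.filterMap_append ..

theorem prW_append (u v : List (Act A)) : prW (u ++ v) = prW u ++ prW v :=
  List.filterMap_append ..

theorem mu_append (u v : List (Act A)) :
    mu (u ++ v) = mu u + (prW u).length * (prR v).length + mu v := by
  induction u with
  | nil => simp [mu, prW]
  | cons x t ih =>
      cases x with
      | wr a =>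
          simp only [List.cons_append, mu, List.append_eq]
          rw [ih, prR_append]
          simp only [prW, List.filterMap_cons, List.length_append, List.length_cons]
          ring
      | rd a =>
          simp only [List.cons_append, mu, List.append_eq]
          rw [ih]
          simp only [prW, List.filterMap_cons]

theorem rule_lengths {x y : List (Act A)} (h : Rule x y) :
    (prW x).length = (prW y).length ∧ (prR x).length = (prR y).length ∧ mu y < mu x := by
  cases h <;> simp [mu, prW, prR, List.filterMap]

theorem step_mu {u v : List (Act A)} (h : Step u v) : mu v < mu u := by
  obtain ⟨l, r, x, y, hr, hu, hv⟩ := h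
  obtain ⟨hW, hR, hmu⟩ := rule_lengths hr
  subst hu hv
  simp only [mu_append, prR_append, prW_append, List.length_append, hW, hR]
  omega

/-- The semi-Thue system `R` is terminating: there is no infinite rewriting sequence. -/
theorem stmt4 [Fintype A] :
    ∀ f : ℕ → List (Act A), ¬ ∀ n : ℕ, Step (f n) (f (n + 1)) := by
  intro f h
  have key : ∀ n, mu (f (n + 1)) < mu (f n) := fun n => step_mu (h n)
  have bound : ∀ n, mu (f n) + n ≤ mu (f 0) := by
    intro n
    induction n with
    | zero => simp
    | succ n ih => have := key n; omega
  have := bound (mu (f 0) + 1)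
  omega
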